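/- arXiv:1510.04674 — 2 statements merged into one kernel-verified Lean document; each statement's English description precedes it below -/
import Mathlib

section
/- Suppose a nonnegative random variable X satisfies, for constants A > 2, m > 0, t > 0, the moment bounds A^{−k} m^k e^{k³ t / A} ≤ E[X^k] ≤ A^k m^k e^{A k³ t} for all k ≥ 2. Then for every k ≥ 2, P{ X ≥ (1/2) A^{−1} m e^{k² t / A} } ≥ (1/4) exp( −8 A k³ t − 4 k log A ). -/
/-!
Apply the Paley–Zygmund inequality to `Y = X ^ k`. The threshold `(θ / 2) ^ k`, with
`θ = A⁻¹ m e^{k² t / A}`, is at most `E[Y] / 4` because `θ ^ k` is the lower moment bound, so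
`P(Y ≥ (θ / 2) ^ k) ≥ (3/4)² E[Y]² / E[Y²]`. Bounding `E[Y]` below and `E[Y²] = E[X ^ 2k]` above
by the moment hypotheses leaves the factor `A^{-4k} e^{(2/A - 8A) k³ t} ≥ e^{-8 A k³ t - 4 k log A}`.
-/

open MeasureTheory Real

lemma rpow_two_mul_eq_sq {x : ℝ} (hx : 0 ≤ x) (k : ℝ) : x ^ (2 * k) = (x ^ k) ^ 2 := by
  rw [mul_comm, rpow_mul hx, rpow_two]

section

variable {Ω : Type*} [MeasurableSpace Ω] {μ : Measure Ω}

lemma setIntegral_le_sqrt_integral_sq_mul_sqrt_measureReal [IsFiniteMeasure μ] {g : Ω → ℝ}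
    (hg0 : 0 ≤ᵐ[μ] g) (hg : MemLp g 2 μ) {S : Set Ω} (hS : MeasurableSet S) :
    ∫ ω in S, g ω ∂μ ≤ √(∫ ω, g ω ^ 2 ∂μ) * √(μ.real S) := by
  have holder := integral_mul_le_Lp_mul_Lq_of_nonneg (p := 2) (q := 2) HolderConjugate.two_two hg0
    (Filter.Eventually.of_forall fun ω => S.indicator_nonneg (fun _ _ => zero_le_one) ω)
    (by simpa using hg) (by simpa using memLp_indicator_const 2 hS (1 : ℝ) (Or.inr (measure_ne_top μ S)))
  have indicator_sq : ∀ ω, S.indicator (fun _ => (1 : ℝ)) ω ^ (2 : ℝ) = S.indicator 1 ω := by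
    intro ω; by_cases h : ω ∈ S <;> simp [h]
  simp only [indicator_sq, integral_indicator_one hS, rpow_two] at holder
  have indicator_eq : S.indicator g = fun ω => g ω * S.indicator (fun _ => (1 : ℝ)) ω := by
    funext ω; by_cases h : ω ∈ S <;> simp [h]
  rw [← integral_indicator hS, indicator_eq, sqrt_eq_rpow, sqrt_eq_rpow]
  exact holder

lemma paley_zygmund_of_measurable [IsProbabilityMeasure μ] {Y : Ω → ℝ} (hYm : Measurable Y)
    (hY0 : 0 ≤ᵐ[μ] Y) (hY : MemLp Y 2 μ) {s : ℝ} (hs0 : 0 ≤ s) (hs : s ≤ ∫ ω, Y ω ∂μ) :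
    (∫ ω, Y ω ∂μ - s) ^ 2 ≤ (∫ ω, Y ω ^ 2 ∂μ) * μ.real {ω | s ≤ Y ω} := by
  set S := {ω | s ≤ Y ω}
  have hS : MeasurableSet S := measurableSet_le measurable_const hYm
  have hYint : Integrable Y μ := hY.integrable one_le_two
  have below : ∫ ω in Sᶜ, Y ω ∂μ ≤ s := calc
    ∫ ω in Sᶜ, Y ω ∂μ ≤ ∫ _ in Sᶜ, s ∂μ :=
      setIntegral_mono_on hYint.integrableOn (integrable_const s) hS.compl
        fun ω hω => le_of_lt (not_le.mp hω)
    _ = μ.real Sᶜ * s := by rw [setIntegral_const, smul_eq_mul]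
    _ ≤ s := mul_le_of_le_one_left hs0 measureReal_le_one
  have above := setIntegral_le_sqrt_integral_sq_mul_sqrt_measureReal hY0 hY hS
  have split := integral_add_compl hS hYint
  have hY2 : 0 ≤ ∫ ω, Y ω ^ 2 ∂μ := integral_nonneg fun ω => sq_nonneg _
  calc (∫ ω, Y ω ∂μ - s) ^ 2 ≤ (√(∫ ω, Y ω ^ 2 ∂μ) * √(μ.real S)) ^ 2 :=
        pow_le_pow_left₀ (by linarith) (by linarith) 2
    _ = _ := by rw [mul_pow, sq_sqrt hY2, sq_sqrt measureReal_nonneg]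

theorem paley_zygmund [IsProbabilityMeasure μ] {Y : Ω → ℝ}
    (hY0 : 0 ≤ᵐ[μ] Y) (hY : MemLp Y 2 μ) {s : ℝ} (hs0 : 0 ≤ s) (hs : s ≤ ∫ ω, Y ω ∂μ) :
    (∫ ω, Y ω ∂μ - s) ^ 2 ≤ (∫ ω, Y ω ^ 2 ∂μ) * μ.real {ω | s ≤ Y ω} := by
  have hYg := hY.1.ae_eq_mk
  set g := hY.1.mk Y
  have hsq : (fun ω => Y ω ^ 2) =ᵐ[μ] fun ω => g ω ^ 2 := hYg.fun_comp (· ^ 2)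
  have hset : {ω | s ≤ Y ω} =ᵐ[μ] {ω | s ≤ g ω} := by
    filter_upwards [hYg] with ω hω
    change (s ≤ Y ω) = (s ≤ g ω)
    rw [hω]
  rw [integral_congr_ae hYg] at hs ⊢
  rw [integral_congr_ae hsq, measureReal_congr hset]
  exact paley_zygmund_of_measurable hY.1.stronglyMeasurable_mk.measurable
    (hY0.trans_eq hYg) (hY.ae_eq hYg) hs0 hs

theorem paley_zygmund_of_le_div_four [IsProbabilityMeasure μ] {Y : Ω → ℝ}
    (hY0 : 0 ≤ᵐ[μ] Y) (hY : MemLp Y 2 μ) {s : ℝ} (hs0 : 0 ≤ s) (hs : s ≤ (∫ ω, Y ω ∂μ) / 4) :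
    (∫ ω, Y ω ∂μ) ^ 2 ≤ 4 * (∫ ω, Y ω ^ 2 ∂μ) * μ.real {ω | s ≤ Y ω} := by
  have pz := paley_zygmund hY0 hY hs0 (by linarith)
  nlinarith

lemma memLp_two_rpow {X : Ω → ℝ} (hX : ∀ ω, 0 ≤ X ω) {k : ℝ}
    (hk : Integrable (fun ω => X ω ^ k) μ) (h2k : Integrable (fun ω => X ω ^ (2 * k)) μ) :
    MemLp (fun ω => X ω ^ k) 2 μ := by
  simp only [rpow_two_mul_eq_sq (hX _)] at h2k
  exact (memLp_two_iff_integrable_sq hk.1).2 h2k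

end

lemma div_two_rpow_le_div_four {x k : ℝ} (hx : 0 ≤ x) (hk : 2 ≤ k) : (x / 2) ^ k ≤ x ^ k / 4 := by
  have four_le : (4 : ℝ) ≤ 2 ^ k := calc
    (4 : ℝ) = 2 ^ (2 : ℝ) := by norm_num
    _ ≤ 2 ^ k := rpow_le_rpow_of_exponent_le one_le_two hk
  rw [div_rpow hx zero_le_two]
  exact div_le_div_of_nonneg_left (rpow_nonneg hx k) four_pos four_le

lemma inv_mul_mul_exp_rpow {A m a k : ℝ} (hA : 0 < A) (hm : 0 ≤ m) :
    (A⁻¹ * m * exp a) ^ k = A ^ (-k) * m ^ k * exp (a * k) := by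
  rw [mul_rpow (by positivity) (exp_pos a).le, mul_rpow (by positivity) hm, inv_rpow hA.le,
    rpow_neg hA.le, ← exp_mul]

lemma exp_mul_upper_moment_le_sq_lower_moment {A m t k : ℝ} (hA : 0 < A) (hm : 0 < m)
    (ht : 0 ≤ t) (hk : 0 ≤ k) :
    exp (-8 * A * k ^ 3 * t - 4 * k * log A) * (A ^ (2 * k) * m ^ (2 * k) * exp (A * (2 * k) ^ 3 * t))
      ≤ (A ^ (-k) * m ^ k * exp (k ^ 3 * t / A)) ^ 2 := by
  simp only [rpow_def_of_pos hA, rpow_def_of_pos hm, ← exp_add, sq]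
  refine exp_le_exp.mpr ?_
  have : 0 ≤ k ^ 3 * t / A := by positivity
  nlinarith

theorem stmt7 {Ω : Type*} [MeasurableSpace Ω] (μ : Measure Ω) [IsProbabilityMeasure μ]
    (X : Ω → ℝ) (hX : ∀ ω, 0 ≤ X ω) (A m t : ℝ) (hA : 2 < A) (hm : 0 < m) (ht : 0 < t)
    (hint : ∀ k : ℝ, 2 ≤ k → Integrable (fun ω => X ω ^ k) μ)
    (hmom : ∀ k : ℝ, 2 ≤ k →
      A ^ (-k) * m ^ k * Real.exp (k ^ 3 * t / A) ≤ ∫ ω, X ω ^ k ∂μ ∧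
      (∫ ω, X ω ^ k ∂μ) ≤ A ^ k * m ^ k * Real.exp (A * k ^ 3 * t)) :
    ∀ k : ℝ, 2 ≤ k →
      (1/4) * Real.exp (-8 * A * k ^ 3 * t - 4 * k * Real.log A)
        ≤ (μ {ω | (1/2) * A⁻¹ * m * Real.exp (k ^ 2 * t / A) ≤ X ω}).toReal := by
  intro k hk
  have hA0 : 0 < A := by linarith
  have hk0 : 0 < k := by linarith
  set θ := A⁻¹ * m * exp (k ^ 2 * t / A)
  have hθk : θ ^ k = A ^ (-k) * m ^ k * exp (k ^ 3 * t / A) := by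
    rw [inv_mul_mul_exp_rpow hA0 hm.le]; ring_nf
  have hset : {ω | (1/2) * A⁻¹ * m * exp (k ^ 2 * t / A) ≤ X ω} = {ω | (θ / 2) ^ k ≤ X ω ^ k} := by
    ext ω
    rw [Set.mem_ofPred_eq, Set.mem_ofPred_eq, rpow_le_rpow_iff (by positivity) (hX ω) hk0,
      show θ / 2 = 1 / 2 * A⁻¹ * m * exp (k ^ 2 * t / A) by ring]
  have hlower := (hmom k hk).1
  have hupper := (hmom (2 * k) (by linarith)).2
  have hs : (θ / 2) ^ k ≤ (∫ ω, X ω ^ k ∂μ) / 4 :=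
    (div_two_rpow_le_div_four (by positivity) hk).trans (by rw [hθk]; linarith)
  have pz := paley_zygmund_of_le_div_four (ae_of_all μ fun ω => rpow_nonneg (hX ω) k)
    (memLp_two_rpow hX (hint k hk) (hint (2 * k) (by linarith))) (by positivity) hs
  simp only [← rpow_two_mul_eq_sq (hX _)] at pz
  have hexp := (exp_mul_upper_moment_le_sq_lower_moment hA0 hm ht.le hk0.le).trans
    (pow_le_pow_left₀ (by positivity) hlower 2)
  have hpos : 0 < ∫ ω, X ω ^ (2 * k) ∂μ :=
    lt_of_lt_of_le (by positivity) (hmom (2 * k) (by linarith)).1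
  rw [← measureReal_def, hset]
  refine le_of_mul_le_mul_left ?_ hpos
  nlinarith [exp_pos (-8 * A * k ^ 3 * t - 4 * k * log A)]
end

section
/- Let J_t(x) := (p_t * f)(x) where f ∈ L^∞(ℝ) vanishes a.e. on [a − r, a + r], with B := ‖f‖_{L^∞(ℝ)}. Then for all 0 < s < t and all x with |x − a| ≤ r/4, (J_{t−s}² * p_{s/2})(x) ≤ 4B² e^{−r²/(4t)} + 2B² e^{−r²/(16s)} ≤ 6 B² e^{−r²/(16t)}. -/
open MeasureTheory Real

noncomputable def heatKernel (t x : ℝ) : ℝ :=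
  (2 * Real.pi * t) ^ (-(1:ℝ)/2) * Real.exp (-x ^ 2 / (2 * t))

/-
Write `J_u = p_u * f`, so `|J_u| ≤ B`. For `|y| ≥ c` the Gaussian satisfies
`p_u(y) ≤ e^{-c²/(2u)} (p_u(y - c) + p_u(y + c))`, whose right side integrates to `2e^{-c²/(2u)}`.
Applied to the inner integral, this makes `J_u` small where `f` vanishes nearby:
`|J_{t-s}(x - y)| ≤ 2B e^{-r²/(8(t-s))}` for `|y| ≤ r/4`. Applied to the outer integral, split at
`|y| = r/4`, it bounds the part with `|y| > r/4` by `B² · 2e^{-r²/(16s)}`; the part with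
`|y| ≤ r/4` is at most `(2B e^{-r²/(8(t-s))})² ≤ 4B² e^{-r²/(4t)}`.
-/

lemma heatKernel_nonneg {u : ℝ} (hu : 0 < u) (y : ℝ) : 0 ≤ heatKernel u y :=
  mul_nonneg (rpow_nonneg (by positivity) _) (exp_pos _).le

lemma heatKernel_neg (u y : ℝ) : heatKernel u (-y) = heatKernel u y := by
  simp only [heatKernel, neg_sq]

lemma heatKernel_eq_mul_exp_neg_mul_sq (u : ℝ) :
    heatKernel u = fun y ↦ (2 * π * u) ^ (-(1:ℝ)/2) * exp (-(1 / (2 * u)) * y ^ 2) := by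
  ext y
  rw [heatKernel]
  congr 2
  ring

lemma integrable_heatKernel {u : ℝ} (hu : 0 < u) : Integrable (heatKernel u) := by
  rw [heatKernel_eq_mul_exp_neg_mul_sq]
  exact (integrable_exp_neg_mul_sq (by positivity)).const_mul _

lemma integral_heatKernel {u : ℝ} (hu : 0 < u) : ∫ y, heatKernel u y = 1 := by
  rw [heatKernel_eq_mul_exp_neg_mul_sq, integral_const_mul, integral_gaussian,
    show π / (1 / (2 * u)) = 2 * π * u by field_simp, sqrt_eq_rpow,
    ← rpow_add (by positivity)]
  norm_num

lemma heatKernel_comp_sub_comm (u b : ℝ) :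
    (fun z ↦ heatKernel u (b - z)) = fun z ↦ heatKernel u (z - b) := by
  ext z
  rw [← heatKernel_neg, neg_sub]

lemma integrable_heatKernel_sub {u : ℝ} (hu : 0 < u) (b : ℝ) :
    Integrable (fun z ↦ heatKernel u (b - z)) := by
  rw [heatKernel_comp_sub_comm]
  exact (integrable_heatKernel hu).comp_sub_right b

lemma integral_heatKernel_sub {u : ℝ} (hu : 0 < u) (b : ℝ) : ∫ z, heatKernel u (b - z) = 1 := by
  rw [heatKernel_comp_sub_comm, integral_sub_right_eq_self, integral_heatKernel hu]

lemma integrable_heatKernel_shift_add_shift {u : ℝ} (hu : 0 < u) (c : ℝ) :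
    Integrable (fun y ↦ heatKernel u (y - c) + heatKernel u (y + c)) :=
  ((integrable_heatKernel hu).comp_sub_right c).add ((integrable_heatKernel hu).comp_add_right c)

lemma integral_heatKernel_shift_add_shift {u : ℝ} (hu : 0 < u) (c : ℝ) :
    ∫ y, (heatKernel u (y - c) + heatKernel u (y + c)) = 2 := by
  rw [integral_add ((integrable_heatKernel hu).comp_sub_right c)
      ((integrable_heatKernel hu).comp_add_right c),
    integral_sub_right_eq_self, integral_add_right_eq_self, integral_heatKernel hu]
  norm_num

-- Because `y² ≥ (y - c)² + c²` when `0 ≤ c ≤ y`.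
lemma heatKernel_le_exp_mul_shift {u c y : ℝ} (hu : 0 < u) (hc : 0 ≤ c) (hy : c ≤ y) :
    heatKernel u y ≤ exp (-c ^ 2 / (2 * u)) * heatKernel u (y - c) := by
  have hexp : exp (-y ^ 2 / (2 * u)) ≤ exp (-(y - c) ^ 2 / (2 * u)) * exp (-c ^ 2 / (2 * u)) := by
    rw [← exp_add, exp_le_exp, ← add_div, div_le_div_iff_of_pos_right (by positivity)]
    nlinarith [mul_nonneg hc (sub_nonneg.mpr hy)]
  calc heatKernel u y
      ≤ (2 * π * u) ^ (-(1:ℝ)/2) * (exp (-(y - c) ^ 2 / (2 * u)) * exp (-c ^ 2 / (2 * u))) :=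
        mul_le_mul_of_nonneg_left hexp (rpow_nonneg (by positivity) _)
    _ = exp (-c ^ 2 / (2 * u)) * heatKernel u (y - c) := by rw [heatKernel]; ring

lemma heatKernel_le_exp_mul_shift_add_shift {u c y : ℝ} (hu : 0 < u) (hc : 0 ≤ c)
    (hy : c ≤ |y|) :
    heatKernel u y ≤ exp (-c ^ 2 / (2 * u)) * (heatKernel u (y - c) + heatKernel u (y + c)) := by
  have hE : 0 ≤ exp (-c ^ 2 / (2 * u)) := (exp_pos _).le
  rcases le_abs.mp hy with hy | hy
  · nlinarith [heatKernel_le_exp_mul_shift hu hc hy, heatKernel_nonneg hu (y + c)]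
  · have h := heatKernel_le_exp_mul_shift hu hc hy
    rw [heatKernel_neg, ← neg_add', heatKernel_neg] at h
    nlinarith [heatKernel_nonneg hu (y - c)]

noncomputable def heatConv (u : ℝ) (f : ℝ → ℝ) (w : ℝ) : ℝ :=
  ∫ z, heatKernel u (w - z) * f z

section heatConv

variable {u B : ℝ} {f : ℝ → ℝ}

lemma abs_heatConv_le (hu : 0 < u) (hbd : ∀ᵐ z, |f z| ≤ B) (w : ℝ) : |heatConv u f w| ≤ B := by
  have hae : ∀ᵐ z, ‖heatKernel u (w - z) * f z‖ ≤ B * heatKernel u (w - z) := by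
    filter_upwards [hbd] with z hz
    rw [norm_mul, norm_of_nonneg (heatKernel_nonneg hu _), Real.norm_eq_abs, mul_comm]
    exact mul_le_mul_of_nonneg_right hz (heatKernel_nonneg hu _)
  calc |heatConv u f w| ≤ ∫ z, B * heatKernel u (w - z) :=
        norm_integral_le_of_norm_le ((integrable_heatKernel_sub hu w).const_mul B) hae
    _ = B := by rw [integral_const_mul, integral_heatKernel_sub hu, mul_one]

lemma abs_heatConv_le_of_ae_eq_zero_near {c w : ℝ} (hu : 0 < u) (hc : 0 ≤ c)
    (hbd : ∀ᵐ z, |f z| ≤ B) (hvan : ∀ᵐ z, |w - z| < c → f z = 0) :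
    |heatConv u f w| ≤ 2 * B * exp (-c ^ 2 / (2 * u)) := by
  set E := exp (-c ^ 2 / (2 * u))
  obtain ⟨z₀, hz₀⟩ := hbd.exists
  have hB : 0 ≤ B := (abs_nonneg _).trans hz₀
  set g := fun z ↦ heatKernel u (w - c - z) + heatKernel u (w + c - z)
  have hg_nonneg : ∀ z, 0 ≤ g z := fun z ↦
    add_nonneg (heatKernel_nonneg hu _) (heatKernel_nonneg hu _)
  have hae : ∀ᵐ z, ‖heatKernel u (w - z) * f z‖ ≤ B * E * g z := by
    filter_upwards [hbd, hvan] with z hz hv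
    rcases lt_or_ge |w - z| c with hnear | hfar
    · rw [hv hnear, mul_zero, norm_zero]
      exact mul_nonneg (mul_nonneg hB (exp_pos _).le) (hg_nonneg z)
    · have hp := heatKernel_le_exp_mul_shift_add_shift hu hc hfar
      rw [sub_right_comm, sub_add_eq_add_sub] at hp
      rw [norm_mul, norm_of_nonneg (heatKernel_nonneg hu _), Real.norm_eq_abs]
      calc heatKernel u (w - z) * |f z| ≤ E * g z * B :=
            mul_le_mul hp hz (abs_nonneg _) (mul_nonneg (exp_pos _).le (hg_nonneg z))
        _ = B * E * g z := by ring
  have hg_int : Integrable g :=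
    (integrable_heatKernel_sub hu _).add (integrable_heatKernel_sub hu _)
  calc |heatConv u f w| ≤ ∫ z, B * E * g z :=
        norm_integral_le_of_norm_le (hg_int.const_mul _) hae
    _ = 2 * B * E := by
        rw [integral_const_mul, integral_add (integrable_heatKernel_sub hu _)
          (integrable_heatKernel_sub hu _), integral_heatKernel_sub hu,
          integral_heatKernel_sub hu]
        ring

end heatConv

lemma integral_sq_mul_heatKernel_le {v c δ B : ℝ} {g : ℝ → ℝ} (hv : 0 < v) (hc : 0 ≤ c)
    (hB : ∀ y, |g y| ≤ B) (hδ : ∀ y, |y| ≤ c → |g y| ≤ δ) :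
    ∫ y, g y ^ 2 * heatKernel v y ≤ δ ^ 2 + 2 * B ^ 2 * exp (-c ^ 2 / (2 * v)) := by
  set E := exp (-c ^ 2 / (2 * v))
  set h := fun y ↦ heatKernel v (y - c) + heatKernel v (y + c)
  have hpt : ∀ y, g y ^ 2 * heatKernel v y ≤ δ ^ 2 * heatKernel v y + B ^ 2 * E * h y := by
    intro y
    have hp := heatKernel_nonneg hv y
    have hh : 0 ≤ h y := add_nonneg (heatKernel_nonneg hv _) (heatKernel_nonneg hv _)
    rcases le_or_gt |y| c with hnear | hfar
    · have hg : g y ^ 2 ≤ δ ^ 2 := sq_le_sq' (abs_le.mp (hδ y hnear)).1 (abs_le.mp (hδ y hnear)).2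
      have : 0 ≤ B ^ 2 * E * h y := by positivity
      nlinarith
    · have hg : g y ^ 2 ≤ B ^ 2 := sq_le_sq' (abs_le.mp (hB y)).1 (abs_le.mp (hB y)).2
      have hpE := heatKernel_le_exp_mul_shift_add_shift hv hc hfar.le
      have : 0 ≤ δ ^ 2 * heatKernel v y := by positivity
      calc g y ^ 2 * heatKernel v y ≤ B ^ 2 * (E * h y) := mul_le_mul hg hpE hp (sq_nonneg B)
        _ ≤ δ ^ 2 * heatKernel v y + B ^ 2 * E * h y := by linarith
  have hint : Integrable (fun y ↦ δ ^ 2 * heatKernel v y + B ^ 2 * E * h y) :=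
    ((integrable_heatKernel hv).const_mul _).add
      ((integrable_heatKernel_shift_add_shift hv c).const_mul _)
  calc ∫ y, g y ^ 2 * heatKernel v y
      ≤ ∫ y, δ ^ 2 * heatKernel v y + B ^ 2 * E * h y :=
        integral_mono_of_nonneg (.of_forall fun y ↦
          mul_nonneg (sq_nonneg _) (heatKernel_nonneg hv y)) hint (.of_forall hpt)
    _ = δ ^ 2 + 2 * B ^ 2 * E := by
        rw [integral_add ((integrable_heatKernel hv).const_mul _)
          ((integrable_heatKernel_shift_add_shift hv c).const_mul _), integral_const_mul,
          integral_const_mul, integral_heatKernel hv,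
          integral_heatKernel_shift_add_shift hv c]
        ring

lemma exp_neg_div_le_exp_neg_div {A u v : ℝ} (hA : 0 ≤ A) (hu : 0 < u) (huv : u ≤ v) :
    exp (-A / u) ≤ exp (-A / v) := by
  rw [exp_le_exp, neg_div, neg_div, neg_le_neg_iff]
  gcongr

theorem stmt16_general (a r : ℝ) (f : ℝ → ℝ) (B : ℝ)
    (hbd : ∀ᵐ y : ℝ, |f y| ≤ B)
    (hvan : ∀ᵐ y : ℝ, y ∈ Set.Icc (a - r) (a + r) → f y = 0)
    (s t : ℝ) (hs : 0 < s) (hst : s < t) (x : ℝ) (hx : |x - a| ≤ r / 4) :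
    (∫ y : ℝ, (∫ z : ℝ, heatKernel (t - s) (x - y - z) * f z) ^ 2 * heatKernel (s / 2) y)
        ≤ 4 * B ^ 2 * Real.exp (-r ^ 2 / (4 * t)) + 2 * B ^ 2 * Real.exp (-r ^ 2 / (16 * s)) ∧
      4 * B ^ 2 * Real.exp (-r ^ 2 / (4 * t)) + 2 * B ^ 2 * Real.exp (-r ^ 2 / (16 * s))
        ≤ 6 * B ^ 2 * Real.exp (-r ^ 2 / (16 * t)) := by
  have hr : 0 ≤ r / 4 := (abs_nonneg _).trans hx
  have ht : 0 < t := hs.trans hst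
  have hts : 0 < t - s := sub_pos.mpr hst
  have hnear (y : ℝ) (hy : |y| ≤ r / 4) :
      |heatConv (t - s) f (x - y)| ≤ 2 * B * exp (-(r / 2) ^ 2 / (2 * (t - s))) := by
    refine abs_heatConv_le_of_ae_eq_zero_near hts (by linarith) hbd ?_
    filter_upwards [hvan] with z hz hzw
    refine hz ⟨?_, ?_⟩ <;> linarith [abs_lt.mp hzw, abs_le.mp hx, abs_le.mp hy]
  have hsplit := integral_sq_mul_heatKernel_le (half_pos hs) hr
    (abs_heatConv_le hts hbd <| x - ·) hnear
  have hsq : (2 * B * exp (-(r / 2) ^ 2 / (2 * (t - s)))) ^ 2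
      = 4 * B ^ 2 * exp (-r ^ 2 / (4 * (t - s))) := by
    rw [mul_pow, mul_pow, sq (exp _), ← exp_add]
    congr 2
    · norm_num
    · field_simp
      ring
  constructor
  · refine hsplit.trans ?_
    rw [hsq, show -(r / 4) ^ 2 / (2 * (s / 2)) = -r ^ 2 / (16 * s) by ring]
    gcongr 4 * B ^ 2 * ?_ + _
    exact exp_neg_div_le_exp_neg_div (sq_nonneg r) (by positivity) (by linarith)
  · have h4t := exp_neg_div_le_exp_neg_div (sq_nonneg r) (by positivity : 0 < 4 * t)
      (by linarith : 4 * t ≤ 16 * t)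
    have h16s := exp_neg_div_le_exp_neg_div (sq_nonneg r) (by positivity : 0 < 16 * s)
      (by linarith : 16 * s ≤ 16 * t)
    nlinarith [sq_nonneg B]

theorem stmt16 (a r : ℝ) (hr : 0 < r) (f : ℝ → ℝ) (B : ℝ) (hB0 : 0 ≤ B)
    (hbd : ∀ᵐ y : ℝ, |f y| ≤ B)
    (hvan : ∀ᵐ y : ℝ, y ∈ Set.Icc (a - r) (a + r) → f y = 0)
    (s t : ℝ) (hs : 0 < s) (hst : s < t) (x : ℝ) (hx : |x - a| ≤ r / 4) :
    (∫ y : ℝ, (∫ z : ℝ, heatKernel (t - s) (x - y - z) * f z) ^ 2 * heatKernel (s / 2) y)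
        ≤ 4 * B ^ 2 * Real.exp (-r ^ 2 / (4 * t)) + 2 * B ^ 2 * Real.exp (-r ^ 2 / (16 * s)) ∧
      4 * B ^ 2 * Real.exp (-r ^ 2 / (4 * t)) + 2 * B ^ 2 * Real.exp (-r ^ 2 / (16 * s))
        ≤ 6 * B ^ 2 * Real.exp (-r ^ 2 / (16 * t)) :=
  stmt16_general a r f B hbd hvan s t hs hst x hx
end
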